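/- arXiv:2205.12632 — 4 statements merged into one kernel-verified Lean document; each statement's English description precedes it below -/
import Mathlib

section
/- Let n, m be natural numbers, let P be a symmetric invertible real (n+m)×(n+m) matrix (viewed as a block matrix with diagonal blocks of sizes n and m), and let W be a real m×n matrix. Let U be the (n+m)×n matrix obtained by stacking the n×n identity matrix on top of W, let L be the (n+m)×m matrix obtained by stacking Wᵀ on top of −I_m, let P₂₂ denote the lower-right m×m block of P, and let (P⁻¹)₁₁ denote the upper-left n×n block of P⁻¹. Then the primal matrix inequalities [UᵀPU is negative definite and P₂₂ is positive definite] hold if and only if the dual matrix inequalities [LᵀP⁻¹L is positive definite and (P⁻¹)₁₁ is negative definite] hold. -/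
/-!
Let `Z = [[I, 0], [W, -I]]`: an involution whose first block column is `U` and such that the
second block column of `Zᵀ` is `L`. For the congruent matrix `X = Zᵀ P Z` this gives
`X₁₁ = UᵀPU` and `X₂₂ = P₂₂`, and, as `X⁻¹ = Z P⁻¹ Zᵀ`, also `(X⁻¹)₁₁ = (P⁻¹)₁₁` and
`(X⁻¹)₂₂ = LᵀP⁻¹L`. So it suffices that `X₁₁ ≺ 0 ∧ X₂₂ ≻ 0` passes from a symmetric invertible
`X` to `X⁻¹` (the converse is the same statement for `X⁻¹`). This holds because the diagonal
blocks of `X⁻¹` are the inverses of the Schur complements `X₁₁ - X₁₂ X₂₂⁻¹ X₂₁`, a negative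
definite matrix plus a negative semidefinite one, and `X₂₂ - X₂₁ X₁₁⁻¹ X₁₂`, a positive definite
matrix plus a positive semidefinite one.
-/

open Matrix
open scoped ComplexOrder

namespace Matrix

section BlockProducts

variable {l n m k R : Type*}

theorem toCols₁_fromBlocks (A : Matrix n l R) (B : Matrix n m R) (C : Matrix k l R)
    (D : Matrix k m R) : (fromBlocks A B C D).toCols₁ = fromRows A C := by
  ext (i | i) j <;> rfl

theorem toCols₂_fromBlocks (A : Matrix n l R) (B : Matrix n m R) (C : Matrix k l R)
    (D : Matrix k m R) : (fromBlocks A B C D).toCols₂ = fromRows B D := by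
  ext (i | i) j <;> rfl

variable [CommSemiring R]

theorem toBlocks₁₁_transpose_mul_mul [Fintype l] (A : Matrix l (n ⊕ m) R) (M : Matrix l l R) :
    (Aᵀ * M * A).toBlocks₁₁ = A.toCols₁ᵀ * M * A.toCols₁ :=
  rfl

theorem toBlocks₂₂_transpose_mul_mul [Fintype l] (A : Matrix l (n ⊕ m) R) (M : Matrix l l R) :
    (Aᵀ * M * A).toBlocks₂₂ = A.toCols₂ᵀ * M * A.toCols₂ :=
  rfl

variable [Fintype n] [Fintype m]

theorem fromRows_zero_left_transpose_mul_mul (D : Matrix m l R) (M : Matrix (n ⊕ m) (n ⊕ m) R) :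
    (fromRows (0 : Matrix n l R) D)ᵀ * M * fromRows (0 : Matrix n l R) D =
      Dᵀ * M.toBlocks₂₂ * D := by
  conv_lhs => rw [← fromBlocks_toBlocks M]
  rw [transpose_fromRows, fromCols_mul_fromBlocks, fromCols_mul_fromRows]
  simp

theorem fromRows_zero_right_transpose_mul_mul (A : Matrix n l R) (M : Matrix (n ⊕ m) (n ⊕ m) R) :
    (fromRows A (0 : Matrix m l R))ᵀ * M * fromRows A (0 : Matrix m l R) =
      Aᵀ * M.toBlocks₁₁ * A := by
  conv_lhs => rw [← fromBlocks_toBlocks M]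
  rw [transpose_fromRows, fromCols_mul_fromBlocks, fromCols_mul_fromRows]
  simp

end BlockProducts

section SchurComplement

variable {α n m : Type*} [CommRing α] [Fintype n] [Fintype m] [DecidableEq n] [DecidableEq m]

theorem inv_neg (A : Matrix n n α) : (-A)⁻¹ = -A⁻¹ := by
  by_cases hA : IsUnit A.det
  · exact inv_eq_left_inv (by rw [neg_mul_neg, nonsing_inv_mul _ hA])
  · have hnA : ¬IsUnit (-A).det := by
      rwa [det_neg, IsUnit.mul_iff, and_iff_right ((isUnit_neg_one (α := α)).pow _)]
    rw [nonsing_inv_apply_not_isUnit _ hA, nonsing_inv_apply_not_isUnit _ hnA, neg_zero]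

theorem inv_transpose_mul_mul_of_mul_self_eq_one {Z : Matrix n n α} (hZ : Z * Z = 1)
    (P : Matrix n n α) : (Zᵀ * P * Z)⁻¹ = Z * P⁻¹ * Zᵀ := by
  rw [Matrix.mul_inv_rev, Matrix.mul_inv_rev, ← transpose_nonsing_inv, inv_eq_left_inv hZ,
    Matrix.mul_assoc]

theorem toBlocks₁₁_inv (X : Matrix (n ⊕ m) (n ⊕ m) α) (hX : IsUnit X.det)
    (h₂₂ : IsUnit X.toBlocks₂₂.det) :
    X⁻¹.toBlocks₁₁ = (X.toBlocks₁₁ - X.toBlocks₁₂ * X.toBlocks₂₂⁻¹ * X.toBlocks₂₁)⁻¹ := by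
  obtain ⟨A, B, C, D, rfl⟩ : ∃ A B C D, X = fromBlocks A B C D :=
    ⟨_, _, _, _, (fromBlocks_toBlocks X).symm⟩
  let := invertibleOfIsUnitDet D h₂₂
  let := invertibleOfIsUnitDet _ hX
  let := invertibleOfFromBlocks₂₂Invertible A B C D
  rw [← invOf_eq_nonsing_inv, invOf_fromBlocks₂₂_eq]
  simp only [toBlocks_fromBlocks₁₁, toBlocks_fromBlocks₁₂, toBlocks_fromBlocks₂₁,
    toBlocks_fromBlocks₂₂, invOf_eq_nonsing_inv]

theorem toBlocks₂₂_inv (X : Matrix (n ⊕ m) (n ⊕ m) α) (hX : IsUnit X.det)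
    (h₁₁ : IsUnit X.toBlocks₁₁.det) :
    X⁻¹.toBlocks₂₂ = (X.toBlocks₂₂ - X.toBlocks₂₁ * X.toBlocks₁₁⁻¹ * X.toBlocks₁₂)⁻¹ := by
  obtain ⟨A, B, C, D, rfl⟩ : ∃ A B C D, X = fromBlocks A B C D :=
    ⟨_, _, _, _, (fromBlocks_toBlocks X).symm⟩
  let := invertibleOfIsUnitDet A h₁₁
  let := invertibleOfIsUnitDet _ hX
  let := invertibleOfFromBlocks₁₁Invertible A B C D
  rw [← invOf_eq_nonsing_inv, invOf_fromBlocks₁₁_eq]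
  simp only [toBlocks_fromBlocks₁₁, toBlocks_fromBlocks₁₂, toBlocks_fromBlocks₂₁,
    toBlocks_fromBlocks₂₂, invOf_eq_nonsing_inv]

end SchurComplement

section Inertia

variable {𝕜 n m : Type*} [RCLike 𝕜] [Fintype n] [Fintype m] [DecidableEq n] [DecidableEq m]

theorem IsHermitian.inv_toBlocks_negDef_posDef {X : Matrix (n ⊕ m) (n ⊕ m) 𝕜} (hX : X.IsHermitian)
    (hdet : IsUnit X.det) (h₁₁ : (-X.toBlocks₁₁).PosDef) (h₂₂ : X.toBlocks₂₂.PosDef) :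
    (-X⁻¹.toBlocks₁₁).PosDef ∧ X⁻¹.toBlocks₂₂.PosDef := by
  set A := X.toBlocks₁₁
  set B := X.toBlocks₁₂
  set C := X.toBlocks₂₂
  have hB : X.toBlocks₂₁ = Bᴴ := (congrArg toBlocks₂₁ hX.eq).symm
  have hA : IsUnit A.det := (isUnit_iff_isUnit_det A).mp ((IsUnit.neg_iff A).mp h₁₁.isUnit)
  constructor
  · have hS : -(A - B * C⁻¹ * Bᴴ) = -A + B * C⁻¹ * Bᴴ := by abel
    rw [toBlocks₁₁_inv X hdet ((isUnit_iff_isUnit_det C).mp h₂₂.isUnit), hB, ← inv_neg, hS]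
    exact (h₁₁.add_posSemidef (h₂₂.inv.posSemidef.mul_mul_conjTranspose_same B)).inv
  · have hT : C - Bᴴ * A⁻¹ * B = C + Bᴴ * (-A)⁻¹ * B := by
      rw [inv_neg, Matrix.mul_neg, Matrix.neg_mul, sub_eq_add_neg]
    rw [toBlocks₂₂_inv X hdet hA, hB, hT]
    exact (h₂₂.add_posSemidef (h₁₁.inv.posSemidef.conjTranspose_mul_mul_same B)).inv

theorem IsHermitian.inv_toBlocks_negDef_posDef_iff {X : Matrix (n ⊕ m) (n ⊕ m) 𝕜}
    (hX : X.IsHermitian) (hdet : IsUnit X.det) :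
    (-X⁻¹.toBlocks₁₁).PosDef ∧ X⁻¹.toBlocks₂₂.PosDef ↔
      (-X.toBlocks₁₁).PosDef ∧ X.toBlocks₂₂.PosDef := by
  refine ⟨fun ⟨h₁₁, h₂₂⟩ ↦ ?_, fun ⟨h₁₁, h₂₂⟩ ↦ hX.inv_toBlocks_negDef_posDef hdet h₁₁ h₂₂⟩
  simpa only [nonsing_inv_nonsing_inv X hdet] using
    hX.inv.inv_toBlocks_negDef_posDef (isUnit_nonsing_inv_det X hdet) h₁₁ h₂₂

end Inertia

end Matrix

/-- **Dualization lemma** (Lemma 1 of the paper, derived from Lemma 10.2 of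
Scherer–Weiland). For a symmetric invertible `(n+m)×(n+m)` real matrix `P` and
a real `m×n` matrix `W`, with `U = [I; W]` and `L = [Wᵀ; -I]`, the primal matrix
inequalities `UᵀPU ≺ 0` and `P₂₂ ≻ 0` hold iff the dual matrix inequalities
`LᵀP⁻¹L ≻ 0` and `(P⁻¹)₁₁ ≺ 0` hold. -/
theorem dualization_lemma
    (n m : ℕ)
    (P : Matrix (Fin n ⊕ Fin m) (Fin n ⊕ Fin m) ℝ)
    (hPsymm : P.IsSymm)
    (hPinv : IsUnit P.det)
    (W : Matrix (Fin m) (Fin n) ℝ) :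
    ((-((fromRows (1 : Matrix (Fin n) (Fin n) ℝ) W)ᵀ * P *
          fromRows (1 : Matrix (Fin n) (Fin n) ℝ) W)).PosDef ∧
        (P.toBlocks₂₂).PosDef) ↔
      (((fromRows Wᵀ (-1 : Matrix (Fin m) (Fin m) ℝ))ᵀ * P⁻¹ *
          fromRows Wᵀ (-1 : Matrix (Fin m) (Fin m) ℝ)).PosDef ∧
        (-(P⁻¹.toBlocks₁₁)).PosDef) := by
  set U := fromRows (1 : Matrix (Fin n) (Fin n) ℝ) W
  set L := fromRows Wᵀ (-1 : Matrix (Fin m) (Fin m) ℝ)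
  set Z : Matrix (Fin n ⊕ Fin m) (Fin n ⊕ Fin m) ℝ := fromBlocks 1 0 W (-1)
  set X := Zᵀ * P * Z
  have hZZ : Z * Z = 1 := by simp [Z, fromBlocks_multiply, fromBlocks_one]
  have hZt : Zᵀ = fromBlocks 1 Wᵀ 0 (-1) := by simp [Z, fromBlocks_transpose]
  have hXinv : X⁻¹ = Zᵀᵀ * P⁻¹ * Zᵀ := by
    rw [transpose_transpose, inv_transpose_mul_mul_of_mul_self_eq_one hZZ]
  have hX : X.IsHermitian := by
    simpa using isHermitian_conjTranspose_mul_mul Z (isHermitian_iff_isSymm.mpr hPsymm)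
  have hXdet : IsUnit X.det := by
    have hZ : IsUnit Z.det := isUnit_det_of_left_inverse hZZ
    rw [det_mul, det_mul, det_transpose]
    exact (hZ.mul hPinv).mul hZ
  have hU : X.toBlocks₁₁ = Uᵀ * P * U := by
    rw [toBlocks₁₁_transpose_mul_mul, toCols₁_fromBlocks]
  have hP₂₂ : X.toBlocks₂₂ = P.toBlocks₂₂ := by
    rw [toBlocks₂₂_transpose_mul_mul, toCols₂_fromBlocks, fromRows_zero_left_transpose_mul_mul]
    simp
  have hQ₁₁ : X⁻¹.toBlocks₁₁ = P⁻¹.toBlocks₁₁ := by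
    rw [hXinv, toBlocks₁₁_transpose_mul_mul, hZt, toCols₁_fromBlocks,
      fromRows_zero_right_transpose_mul_mul]
    simp
  have hL : X⁻¹.toBlocks₂₂ = Lᵀ * P⁻¹ * L := by
    rw [hXinv, toBlocks₂₂_transpose_mul_mul, hZt, toCols₂_fromBlocks]
  rw [← hU, ← hP₂₂, ← hL, ← hQ₁₁]
  exact (hX.inv_toBlocks_negDef_posDef_iff hXdet).symm.trans and_comm
end

section
/- Let n, m, k be natural numbers, let P be a symmetric invertible real (n+m)×(n+m) matrix (block sizes n and m), let W₁ be a real n×k matrix admitting a left inverse W₁† (i.e., a k×n matrix with W₁†W₁ = I_k), and let W₂ be a real m×k matrix. Let D be the (n+m)×m matrix obtained by stacking (W₂W₁†)ᵀ on top of −I_m, and let (P⁻¹)₁₁ denote the upper-left n×n block of P⁻¹. If the dual matrix inequalities [DᵀP⁻¹D is positive definite and (P⁻¹)₁₁ is negative definite] hold, then the primal matrix inequalities hold: the k×k matrix SᵀPS is negative definite, where S is the (n+m)×k matrix obtained by stacking W₁ on top of W₂, and the lower-right m×m block P₂₂ of P is positive definite. -/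
/-!
Write `Q = P⁻¹`. The dual inequalities say that `Q` is positive definite on the `m`-dimensional
subspace `range D` and negative definite on the `n`-dimensional subspace `range [I; 0]`; since these
dimensions add up to `n + m`, `Q` is negative definite on the `Q`-orthogonal complement of `range D`
(otherwise adding one more direction to `range D` would give a `Q`-semidefinite subspace meeting
`range [I; 0]`). For `x = S v` we have `Dᵀ x = W₂ W₁† W₁ v - W₂ v = 0`, so `P x` lies in that
complement and `vᵀ Sᵀ P S v = (P x)ᵀ Q (P x) < 0`. The same argument applied to `-P`, with the
roles of the two subspaces exchanged and `x = [0; w]`, gives `wᵀ P₂₂ w > 0`.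
-/

open Matrix

open Module in
theorem LinearMap.BilinForm.IsSymm.apply_self_neg_of_mem_orthogonal {K E : Type*} [Field K]
    [LinearOrder K] [IsStrictOrderedRing K] [AddCommGroup E] [Module K E] [FiniteDimensional K E]
    {B : LinearMap.BilinForm K E} (hB : B.IsSymm) {U V : Submodule K E}
    (hdim : finrank K E ≤ finrank K U + finrank K V)
    (hU : ∀ u ∈ U, u ≠ 0 → 0 < B u u) (hV : ∀ v ∈ V, v ≠ 0 → B v v < 0)
    {y : E} (hy : y ∈ B.orthogonal U) (hy₀ : y ≠ 0) : B y y < 0 := by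
  by_contra! hyy
  have hU_nonneg : ∀ u ∈ U, 0 ≤ B u u := fun u hu ↦ by
    rcases eq_or_ne u 0 with rfl | hu₀
    · simp
    · exact (hU u hu hu₀).le
  set W := U ⊔ K ∙ y
  have hW : ∀ w ∈ W, 0 ≤ B w w := by
    intro w hw
    obtain ⟨u, hu, _, hz, rfl⟩ := Submodule.mem_sup.mp hw
    obtain ⟨c, rfl⟩ := Submodule.mem_span_singleton.mp hz
    have huy : B u y = 0 := hy u hu
    have hyu : B y u = 0 := hB.eq y u ▸ huy
    have hexpand : B (u + c • y) (u + c • y) = B u u + c * c * B y y := by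
      simp [huy, hyu]; ring
    rw [hexpand]
    exact add_nonneg (hU_nonneg u hu) (mul_nonneg (mul_self_nonneg c) hyy)
  have hdisj : Disjoint W V := by
    rw [Submodule.disjoint_def]
    intro w hwW hwV
    by_contra hw₀
    exact (hV w hwV hw₀).not_ge (hW w hwW)
  have hUW : U = W := Submodule.eq_of_le_of_finrank_le le_sup_left (by
    have := Submodule.finrank_add_finrank_le_of_disjoint hdisj
    omega)
  have hyU : y ∈ U := hUW ▸ Submodule.mem_sup_right (Submodule.mem_span_singleton_self y)
  exact (hU y hyU hy₀).ne' (hy y hyU)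

namespace Matrix

section Blocks

variable {α β R : Type*} [Fintype α] [Fintype β] [Semiring R]

theorem transpose_fromRows_one_zero_mul_mul [DecidableEq α]
    (Q : Matrix (α ⊕ β) (α ⊕ β) R) :
    (fromRows 1 0 : Matrix (α ⊕ β) α R)ᵀ * Q * (fromRows 1 0 : Matrix (α ⊕ β) α R) =
      Q.toBlocks₁₁ := by
  ext i j
  simp [Matrix.mul_apply, Fintype.sum_sum_type, toBlocks₁₁, one_apply]

theorem transpose_fromRows_zero_one_mul_mul [DecidableEq β]
    (Q : Matrix (α ⊕ β) (α ⊕ β) R) :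
    (fromRows 0 1 : Matrix (α ⊕ β) β R)ᵀ * Q * (fromRows 0 1 : Matrix (α ⊕ β) β R) =
      Q.toBlocks₂₂ := by
  ext i j
  simp [Matrix.mul_apply, Fintype.sum_sum_type, toBlocks₂₂, one_apply]

end Blocks

theorem mulVec_injective_of_mul_eq_one {ι κ R : Type*} [Fintype ι] [Fintype κ] [DecidableEq κ]
    [Semiring R] {L : Matrix κ ι R} {S : Matrix ι κ R} (h : L * S = 1) :
    Function.Injective S.mulVec := fun v w hvw ↦ by
  simpa [mulVec_mulVec, h] using congrArg (L *ᵥ ·) hvw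

variable {ι κ μ ν : Type*} [Fintype ι] [Fintype κ] [Fintype μ] [Fintype ν]

theorem dotProduct_transpose_mul_mul_mulVec (Q : Matrix ι ι ℝ) (D : Matrix ι κ ℝ)
    (w : κ → ℝ) :
    w ⬝ᵥ (Dᵀ * Q * D) *ᵥ w = D *ᵥ w ⬝ᵥ Q *ᵥ (D *ᵥ w) := by
  rw [← mulVec_mulVec, ← mulVec_mulVec, dotProduct_mulVec, vecMul_transpose]

section PosDefOnRange

variable {Q : Matrix ι ι ℝ} {D : Matrix ι κ ℝ}

theorem PosDef.dotProduct_mulVec_pos_of_mem_range (hD : (Dᵀ * Q * D).PosDef) {u : ι → ℝ}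
    (hu : u ∈ LinearMap.range D.mulVecLin) (hu₀ : u ≠ 0) : 0 < u ⬝ᵥ Q *ᵥ u := by
  obtain ⟨w, rfl⟩ := hu
  have hw₀ : w ≠ 0 := by rintro rfl; simp at hu₀
  simpa [dotProduct_transpose_mul_mul_mulVec] using hD.dotProduct_mulVec_pos hw₀

theorem PosDef.finrank_range_mulVecLin (hD : (Dᵀ * Q * D).PosDef) :
    Module.finrank ℝ (LinearMap.range D.mulVecLin) = Fintype.card κ := by
  have hinj : Function.Injective D.mulVecLin := by
    rw [← LinearMap.ker_eq_bot, LinearMap.ker_eq_bot']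
    intro w hw
    by_contra hw₀
    have := hD.dotProduct_mulVec_pos hw₀
    simp_all [dotProduct_transpose_mul_mul_mulVec]
  rw [LinearMap.finrank_range_of_inj hinj, Module.finrank_fintype_fun_eq_card]

end PosDefOnRange

variable [DecidableEq ι] {P : Matrix ι ι ℝ} (hP : P.IsSymm) (hPdet : IsUnit P.det)
  {D : Matrix ι κ ℝ} {E : Matrix ι μ ℝ}
  (hD : (Dᵀ * P⁻¹ * D).PosDef) (hE : (-(Eᵀ * P⁻¹ * E)).PosDef)
  (hdim : Fintype.card ι ≤ Fintype.card κ + Fintype.card μ)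
include hP hPdet hD hE hdim

theorem dotProduct_mulVec_neg_of_transpose_mulVec_eq_zero {x : ι → ℝ} (hx : x ≠ 0)
    (hDx : Dᵀ *ᵥ x = 0) : x ⬝ᵥ P *ᵥ x < 0 := by
  have hPP : ∀ z, P⁻¹ *ᵥ (P *ᵥ z) = z := fun z ↦ by
    rw [mulVec_mulVec, nonsing_inv_mul P hPdet, one_mulVec]
  have hE' : (Eᵀ * -P⁻¹ * E).PosDef := by simpa [Matrix.mul_neg, Matrix.neg_mul] using hE
  have hPx : P *ᵥ x ≠ 0 := fun h ↦ hx (by rw [← hPP x, h, mulVec_zero])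
  have hneg := (isSymm_toBilin'_iff_isSymm.mpr hP.inv).apply_self_neg_of_mem_orthogonal
    (U := LinearMap.range D.mulVecLin) (V := LinearMap.range E.mulVecLin)
    (by rw [hD.finrank_range_mulVecLin, hE'.finrank_range_mulVecLin,
      Module.finrank_fintype_fun_eq_card]; exact hdim)
    (fun u hu hu₀ ↦ by
      simpa [toBilin'_apply'] using hD.dotProduct_mulVec_pos_of_mem_range hu hu₀)
    (fun v hv hv₀ ↦ by
      simpa [toBilin'_apply', neg_mulVec] using hE'.dotProduct_mulVec_pos_of_mem_range hv hv₀)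
    (y := P *ᵥ x) (by
      rintro _ ⟨w, rfl⟩
      rw [mulVecLin_apply, toBilin'_apply', hPP, dotProduct_comm, dotProduct_mulVec,
        ← mulVec_transpose, hDx, zero_dotProduct]) hPx
  rwa [toBilin'_apply', hPP, dotProduct_comm] at hneg

theorem posDef_neg_transpose_mul_mul_of_transpose_mul_eq_zero {S : Matrix ι ν ℝ}
    (hS : Function.Injective S.mulVec) (hDS : Dᵀ * S = 0) : (-(Sᵀ * P * S)).PosDef := by
  have hPherm : P.IsHermitian := isHermitian_iff_isSymm.mpr hP
  refine .of_dotProduct_mulVec_pos ?_ fun v hv ↦ ?_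
  · simpa [conjTranspose_eq_transpose_of_trivial] using
      (isHermitian_conjTranspose_mul_mul S hPherm).neg
  have hSv : S *ᵥ v ≠ 0 := fun h ↦ hv (hS (h.trans (mulVec_zero S).symm))
  have := dotProduct_mulVec_neg_of_transpose_mulVec_eq_zero hP hPdet hD hE hdim hSv
    (by rw [mulVec_mulVec, hDS, zero_mulVec])
  rw [star_trivial, neg_mulVec, dotProduct_neg, dotProduct_transpose_mul_mul_mulVec]
  linarith

end Matrix

/-- **Modified dualization lemma** (Lemma 2 of the paper). If `W₁` admits a left
inverse `W₁†` and the dual matrix inequalities hold for `D = [(W₂W₁†)ᵀ; -I]`,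
then the primal matrix inequalities hold for `S = [W₁; W₂]`. -/
theorem modified_dualization_lemma
    (n m k : ℕ)
    (P : Matrix (Fin n ⊕ Fin m) (Fin n ⊕ Fin m) ℝ)
    (hPsymm : P.IsSymm)
    (hPinv : IsUnit P.det)
    (W₁ : Matrix (Fin n) (Fin k) ℝ)
    (W₁dag : Matrix (Fin k) (Fin n) ℝ)
    (hleft : W₁dag * W₁ = 1)
    (W₂ : Matrix (Fin m) (Fin k) ℝ)
    (hdual₁ : ((fromRows (W₂ * W₁dag)ᵀ (-1 : Matrix (Fin m) (Fin m) ℝ))ᵀ * P⁻¹ *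
        fromRows (W₂ * W₁dag)ᵀ (-1 : Matrix (Fin m) (Fin m) ℝ)).PosDef)
    (hdual₂ : (-(P⁻¹.toBlocks₁₁)).PosDef) :
    (-((fromRows W₁ W₂)ᵀ * P * fromRows W₁ W₂)).PosDef ∧ (P.toBlocks₂₂).PosDef := by
  have hdim : Fintype.card (Fin n ⊕ Fin m) ≤ Fintype.card (Fin m) + Fintype.card (Fin n) := by
    simp [add_comm]
  have hdual₂' : (-((fromRows 1 0 : Matrix (Fin n ⊕ Fin m) (Fin n) ℝ)ᵀ * P⁻¹ *
      (fromRows 1 0 : Matrix (Fin n ⊕ Fin m) (Fin n) ℝ))).PosDef := by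
    rwa [transpose_fromRows_one_zero_mul_mul]
  have hnegP : (-P)⁻¹ = -P⁻¹ := by simpa using inv_smul' (A := P) (-1 : ℝˣ) hPinv
  constructor
  · refine posDef_neg_transpose_mul_mul_of_transpose_mul_eq_zero hPsymm hPinv hdual₁ hdual₂'
      hdim (mulVec_injective_of_mul_eq_one (L := fromCols W₁dag 0) ?_) ?_
    · simp [fromCols_mul_fromRows, hleft]
    · simp [transpose_fromRows, fromCols_mul_fromRows, Matrix.mul_assoc, hleft]
  · have h := posDef_neg_transpose_mul_mul_of_transpose_mul_eq_zero (P := -P) hPsymm.neg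
      (by simpa [det_neg] using hPinv) (by simpa [hnegP] using hdual₂')
      (by simpa [hnegP] using hdual₁) (by simp)
      (mulVec_injective_of_mul_eq_one
        (L := (fromCols 0 1 : Matrix (Fin m) (Fin n ⊕ Fin m) ℝ)) ?_)
      (S := (fromRows 0 1 : Matrix (Fin n ⊕ Fin m) (Fin m) ℝ)) ?_
    · simpa [transpose_fromRows_zero_one_mul_mul] using h
    · simp [fromCols_mul_fromRows]
    · simp [transpose_fromRows, fromCols_mul_fromRows]
end

section
/- Let a, d be natural numbers and let Q and M be symmetric real (a+d)×(a+d) matrices. Let S ⊆ ℝᵃ × ℝᵈ be a set such that every (v,w) ∈ S satisfies (v,w)ᵀM(v,w) ≥ 0, where (v,w) denotes the concatenated vector in ℝ^{a+d}. Write Q̄ := Q + M as a block matrix with blocks Ā (a×a), B̄ (a×d), B̄ᵀ and C̄ (d×d). If C̄ is negative definite, then for every (v,w) ∈ S: (v,w)ᵀQ(v,w) ≤ vᵀ(Ā − B̄C̄⁻¹B̄ᵀ)v. -/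
open Matrix

namespace Matrix

theorem IsSymm.fromBlocks_toBlocks {m n α : Type*} {M : Matrix (m ⊕ n) (m ⊕ n) α}
    (hM : M.IsSymm) :
    Matrix.fromBlocks M.toBlocks₁₁ M.toBlocks₁₂ M.toBlocks₁₂ᵀ M.toBlocks₂₂ = M := by
  have hB : M.toBlocks₁₂ᵀ = M.toBlocks₂₁ :=
    (isSymm_fromBlocks_iff.mp ((Matrix.fromBlocks_toBlocks M).symm ▸ hM)).2.1
  rw [hB, Matrix.fromBlocks_toBlocks]

variable {m n : Type*} [Fintype m] [Fintype n]

theorem dotProduct_mulVec_nonpos_of_posDef_neg {C : Matrix n n ℝ} (hC : (-C).PosDef)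
    (z : n → ℝ) : z ⬝ᵥ C *ᵥ z ≤ 0 := by
  have h := hC.posSemidef.dotProduct_mulVec_nonneg z
  rw [star_trivial, neg_mulVec, dotProduct_neg] at h
  linarith

/-- Completing the square in `y`: the form equals the Schur term at `x` plus the form of `C`
at `y + C⁻¹ Bᵀ x`, and the latter is `≤ 0`. -/
theorem dotProduct_fromBlocks_mulVec_le_schur [DecidableEq n] (A : Matrix m m ℝ)
    (B : Matrix m n ℝ) {C : Matrix n n ℝ} (hC : (-C).PosDef) (x : m → ℝ) (y : n → ℝ) :
    Sum.elim x y ⬝ᵥ fromBlocks A B Bᵀ C *ᵥ Sum.elim x y ≤ x ⬝ᵥ (A - B * C⁻¹ * Bᵀ) *ᵥ x := by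
  have : Invertible C := ((IsUnit.neg_iff C).mp hC.isUnit).invertible
  have hsplit := schur_complement_eq₂₂ A B x y (isHermitian_neg_iff.mp hC.isHermitian)
  simp only [star_trivial, conjTranspose_eq_transpose_of_trivial, ← dotProduct_mulVec] at hsplit
  rw [hsplit]
  linarith [dotProduct_mulVec_nonpos_of_posDef_neg hC ((C⁻¹ * Bᵀ) *ᵥ x + y)]

end Matrix

/-- Combination of the S-procedure relaxation (8)–(9) with the analytic
maximization (10)–(11): with `Q̄ = Q + M = [Ā B̄; B̄ᵀ C̄]` and `C̄ ≺ 0`, the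
quadratic form of `Q` over the admissible set `S` is overestimated by the
Schur complement `vᵀ(Ā - B̄C̄⁻¹B̄ᵀ)v`. -/
theorem sproc_schur_overestimate
    (a d : ℕ)
    (Q M : Matrix (Fin a ⊕ Fin d) (Fin a ⊕ Fin d) ℝ)
    (hQ : Q.IsSymm) (hM : M.IsSymm)
    (S : Set ((Fin a → ℝ) × (Fin d → ℝ)))
    (hS : ∀ p ∈ S, 0 ≤ Sum.elim p.1 p.2 ⬝ᵥ M.mulVec (Sum.elim p.1 p.2))
    (hC : (-((Q + M).toBlocks₂₂)).PosDef) :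
    ∀ p ∈ S,
      Sum.elim p.1 p.2 ⬝ᵥ Q.mulVec (Sum.elim p.1 p.2) ≤
        p.1 ⬝ᵥ ((Q + M).toBlocks₁₁ -
          (Q + M).toBlocks₁₂ * ((Q + M).toBlocks₂₂)⁻¹ *
            ((Q + M).toBlocks₁₂)ᵀ).mulVec p.1 := by
  rintro ⟨v, w⟩ hp
  have hrelax : Sum.elim v w ⬝ᵥ Q *ᵥ Sum.elim v w ≤ Sum.elim v w ⬝ᵥ (Q + M) *ᵥ Sum.elim v w := by
    rw [add_mulVec, dotProduct_add]
    linarith [hS _ hp]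
  have hschur :=
    dotProduct_fromBlocks_mulVec_le_schur (Q + M).toBlocks₁₁ (Q + M).toBlocks₁₂ hC v w
  rw [(hQ.add hM).fromBlocks_toBlocks] at hschur
  exact hrelax.trans hschur
end

section
/- (Backward step of Theorem 1, Robust DDP.) Let Q and M be symmetric (1+n+m+d)×(1+n+m+d) real matrices, P a symmetric (1+n)×(1+n) real matrix, k¹ ∈ ℝᵐ, and K² a real m×n matrix. Assume: (i) for all x ∈ ℝⁿ, u ∈ ℝᵐ, w ∈ ℝᵈ: f0(x,u) + Vnext(f(x,u,w)) ≤ ξ(x,u,w)ᵀ Q ξ(x,u,w), where Vnext : ℝⁿ → ℝ is a given function; (ii) for all x, u, w with w ∈ C(g(x,u,w)): ξ(x,u,w)ᵀ M ξ(x,u,w) ≥ 0; (iii) the (1+n+d)×(1+n+d) matrix E(k¹,K²)ᵀ (Q + M − P̂) E(k¹,K²) is negative definite. Define the affine policy π̃(x) := u_r + k¹ + K²(x − x_r) and the quadratic function Ṽ(x) := η(x)ᵀ P η(x). Then for every x ∈ ℝⁿ and every w ∈ ℝᵈ with w ∈ C(g(x, π̃(x), w)): f0(x, π̃(x)) + Vnext(f(x,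 π̃(x), w)) ≤ Ṽ(x). -/
open Matrix

/-- Index type for the vector `ξ = (1, δx, δu, δw)` of size `1+n+m+d`. -/
abbrev XiIdx (n m d : ℕ) := Unit ⊕ (Fin n ⊕ (Fin m ⊕ Fin d))

/-- Index type for the vector `η = (1, δx)` of size `1+n`. -/
abbrev EtaIdx (n : ℕ) := Unit ⊕ Fin n

/-- Index type for `(τ, a, b) ∈ ℝ × ℝⁿ × ℝᵈ` of size `1+n+d`. -/
abbrev TabIdx (n d : ℕ) := Unit ⊕ (Fin n ⊕ Fin d)

/-- The vector `ξ(x,u,w) = (1, x - x_r, u - u_r, w - w_r)`. -/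
def xiVec {n m d : ℕ} (xr : Fin n → ℝ) (ur : Fin m → ℝ) (wr : Fin d → ℝ)
    (x : Fin n → ℝ) (u : Fin m → ℝ) (w : Fin d → ℝ) : XiIdx n m d → ℝ :=
  Sum.elim (fun _ => 1) (Sum.elim (x - xr) (Sum.elim (u - ur) (w - wr)))

/-- The vector `η(x) = (1, x - x_r)`. -/
def etaVec {n : ℕ} (xr : Fin n → ℝ) (x : Fin n → ℝ) : EtaIdx n → ℝ :=
  Sum.elim (fun _ => 1) (x - xr)

/-- The `(1+n+m+d)×(1+n+d)` matrix `E(k¹,K²)` mapping `(τ,a,b)` to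
`(τ, a, τ·k¹ + K²a, b)`. -/
def Emat {n m d : ℕ} (k1 : Fin m → ℝ) (K2 : Matrix (Fin m) (Fin n) ℝ) :
    Matrix (XiIdx n m d) (TabIdx n d) ℝ :=
  Matrix.of fun i j =>
    match i, j with
    | Sum.inl _, Sum.inl _ => 1
    | Sum.inl _, Sum.inr _ => 0
    | Sum.inr (Sum.inl p), Sum.inr (Sum.inl q) => if p = q then (1 : ℝ) else 0
    | Sum.inr (Sum.inl _), _ => 0
    | Sum.inr (Sum.inr (Sum.inl p)), Sum.inl _ => k1 p
    | Sum.inr (Sum.inr (Sum.inl p)), Sum.inr (Sum.inl q) => K2 p q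
    | Sum.inr (Sum.inr (Sum.inl _)), Sum.inr (Sum.inr _) => 0
    | Sum.inr (Sum.inr (Sum.inr p)), Sum.inr (Sum.inr q) => if p = q then (1 : ℝ) else 0
    | Sum.inr (Sum.inr (Sum.inr _)), _ => 0

/-- The injection matrix of the leading principal `(1+n)` block into `1+n+m+d`. -/
def Jmat {n m d : ℕ} : Matrix (XiIdx n m d) (EtaIdx n) ℝ :=
  Matrix.of fun i j =>
    match i, j with
    | Sum.inl _, Sum.inl _ => 1
    | Sum.inr (Sum.inl p), Sum.inr q => if p = q then (1 : ℝ) else 0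
    | _, _ => 0

/-- `P̂`: the `(1+n+m+d)×(1+n+m+d)` matrix with `P` as its leading principal
`(1+n)×(1+n)` block and all other entries zero. -/
def Phat {n m d : ℕ} (P : Matrix (EtaIdx n) (EtaIdx n) ℝ) :
    Matrix (XiIdx n m d) (XiIdx n m d) ℝ :=
  (Jmat (n := n) (m := m) (d := d)) * P * (Jmat (n := n) (m := m) (d := d))ᵀ

/- The policy `π̃` fixes the input, so `ξ(x, π̃(x), w) = E(k¹,K²) (1, x - x_r, w - w_r)`; the
negative definiteness of `Eᵀ (Q + M - P̂) E` at this nonzero vector gives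
`ξᵀ Q ξ + ξᵀ M ξ < ξᵀ P̂ ξ = η(x)ᵀ P η(x)`, and the S-procedure term `ξᵀ M ξ` is nonnegative for
admissible disturbances. -/

theorem Matrix.dotProduct_transpose_mul_mul_mulVec_s8 {ι κ R : Type*} [Fintype ι] [Fintype κ]
    [CommSemiring R] (A : Matrix ι κ R) (N : Matrix ι ι R) (z : κ → R) :
    z ⬝ᵥ (Aᵀ * N * A) *ᵥ z = (A *ᵥ z) ⬝ᵥ N *ᵥ (A *ᵥ z) := by
  rw [← mulVec_mulVec, ← mulVec_mulVec, dotProduct_transpose_mulVec, dotProduct_comm]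

def tabVec {n d : ℕ} (xr : Fin n → ℝ) (wr : Fin d → ℝ) (x : Fin n → ℝ) (w : Fin d → ℝ) :
    TabIdx n d → ℝ :=
  Sum.elim (fun _ => 1) (Sum.elim (x - xr) (w - wr))

theorem tabVec_ne_zero {n d : ℕ} (xr : Fin n → ℝ) (wr : Fin d → ℝ) (x : Fin n → ℝ)
    (w : Fin d → ℝ) : tabVec xr wr x w ≠ 0 :=
  fun h => one_ne_zero (congrFun h (Sum.inl ()))

theorem Emat_mulVec_tabVec {n m d : ℕ} (xr : Fin n → ℝ) (ur : Fin m → ℝ) (wr : Fin d → ℝ)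
    (k1 : Fin m → ℝ) (K2 : Matrix (Fin m) (Fin n) ℝ) (x : Fin n → ℝ) (w : Fin d → ℝ) :
    Emat k1 K2 *ᵥ tabVec xr wr x w = xiVec xr ur wr x (ur + k1 + K2 *ᵥ (x - xr)) w := by
  funext i
  rcases i with _ | p | p | p <;>
    simp [mulVec, dotProduct, Fintype.sum_sum_type, Emat, tabVec, xiVec]
  ring

theorem Jmat_transpose_mulVec_xiVec {n m d : ℕ} (xr : Fin n → ℝ) (ur : Fin m → ℝ)
    (wr : Fin d → ℝ) (x : Fin n → ℝ) (u : Fin m → ℝ) (w : Fin d → ℝ) :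
    (Jmat (m := m) (d := d))ᵀ *ᵥ xiVec xr ur wr x u w = etaVec xr x := by
  funext i
  rcases i with _ | p <;>
    simp [mulVec, dotProduct, Fintype.sum_sum_type, Jmat, xiVec, etaVec]

theorem dotProduct_Phat_mulVec {n m d : ℕ} (P : Matrix (EtaIdx n) (EtaIdx n) ℝ)
    (v : XiIdx n m d → ℝ) :
    v ⬝ᵥ Phat P *ᵥ v = (Jmatᵀ *ᵥ v) ⬝ᵥ P *ᵥ (Jmatᵀ *ᵥ v) := by
  simpa only [Phat, transpose_transpose] using dotProduct_transpose_mul_mul_mulVec_s8 Jmatᵀ P v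

theorem robust_ddp_backward_step_general
    (n m d l : ℕ)
    (f : (Fin n → ℝ) → (Fin m → ℝ) → (Fin d → ℝ) → (Fin n → ℝ))
    (g : (Fin n → ℝ) → (Fin m → ℝ) → (Fin d → ℝ) → (Fin l → ℝ))
    (f0 : (Fin n → ℝ) → (Fin m → ℝ) → ℝ)
    (C : (Fin l → ℝ) → Set (Fin d → ℝ))
    (Vnext : (Fin n → ℝ) → ℝ)
    (xr : Fin n → ℝ) (ur : Fin m → ℝ) (wr : Fin d → ℝ)
    (Q M : Matrix (XiIdx n m d) (XiIdx n m d) ℝ)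
    (P : Matrix (EtaIdx n) (EtaIdx n) ℝ)
    (k1 : Fin m → ℝ) (K2 : Matrix (Fin m) (Fin n) ℝ)
    (h1 : ∀ (x : Fin n → ℝ) (u : Fin m → ℝ) (w : Fin d → ℝ),
      f0 x u + Vnext (f x u w) ≤
        xiVec xr ur wr x u w ⬝ᵥ Q.mulVec (xiVec xr ur wr x u w))
    (h2 : ∀ (x : Fin n → ℝ) (u : Fin m → ℝ) (w : Fin d → ℝ), w ∈ C (g x u w) →
      0 ≤ xiVec xr ur wr x u w ⬝ᵥ M.mulVec (xiVec xr ur wr x u w))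
    (h3 : (-((Emat (n := n) (m := m) (d := d) k1 K2)ᵀ * (Q + M - Phat P) * Emat (n := n) (m := m) (d := d) k1 K2)).PosDef) :
    ∀ (x : Fin n → ℝ) (w : Fin d → ℝ),
      w ∈ C (g x (ur + k1 + K2.mulVec (x - xr)) w) →
      f0 x (ur + k1 + K2.mulVec (x - xr)) +
          Vnext (f x (ur + k1 + K2.mulVec (x - xr)) w) ≤
        etaVec xr x ⬝ᵥ P.mulVec (etaVec xr x) := by
  intro x w hw
  set u := ur + k1 + K2 *ᵥ (x - xr)
  set ξ := xiVec xr ur wr x u w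
  have hneg : ξ ⬝ᵥ (Q + M - Phat P) *ᵥ ξ < 0 := by
    have hpos := h3.dotProduct_mulVec_pos (tabVec_ne_zero xr wr x w)
    rwa [star_trivial, neg_mulVec, dotProduct_neg, neg_pos, dotProduct_transpose_mul_mul_mulVec_s8,
      Emat_mulVec_tabVec xr ur] at hpos
  have hP : ξ ⬝ᵥ Phat P *ᵥ ξ = etaVec xr x ⬝ᵥ P *ᵥ etaVec xr x := by
    rw [dotProduct_Phat_mulVec, Jmat_transpose_mulVec_xiVec]
  simp only [sub_mulVec, add_mulVec, dotProduct_sub, dotProduct_add] at hneg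
  linarith [h1 x u w, h2 x u w hw]

/-- **Backward step of Theorem 1 (Robust DDP).** -/
theorem robust_ddp_backward_step
    (n m d l : ℕ)
    (f : (Fin n → ℝ) → (Fin m → ℝ) → (Fin d → ℝ) → (Fin n → ℝ))
    (g : (Fin n → ℝ) → (Fin m → ℝ) → (Fin d → ℝ) → (Fin l → ℝ))
    (f0 : (Fin n → ℝ) → (Fin m → ℝ) → ℝ)
    (C : (Fin l → ℝ) → Set (Fin d → ℝ))
    (Vnext : (Fin n → ℝ) → ℝ)
    (xr : Fin n → ℝ) (ur : Fin m → ℝ) (wr : Fin d → ℝ)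
    (Q M : Matrix (XiIdx n m d) (XiIdx n m d) ℝ)
    (hQsymm : Q.IsSymm) (hMsymm : M.IsSymm)
    (P : Matrix (EtaIdx n) (EtaIdx n) ℝ) (hPsymm : P.IsSymm)
    (k1 : Fin m → ℝ) (K2 : Matrix (Fin m) (Fin n) ℝ)
    (h1 : ∀ (x : Fin n → ℝ) (u : Fin m → ℝ) (w : Fin d → ℝ),
      f0 x u + Vnext (f x u w) ≤
        xiVec xr ur wr x u w ⬝ᵥ Q.mulVec (xiVec xr ur wr x u w))
    (h2 : ∀ (x : Fin n → ℝ) (u : Fin m → ℝ) (w : Fin d → ℝ), w ∈ C (g x u w) →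
      0 ≤ xiVec xr ur wr x u w ⬝ᵥ M.mulVec (xiVec xr ur wr x u w))
    (h3 : (-((Emat (n := n) (m := m) (d := d) k1 K2)ᵀ * (Q + M - Phat P) * Emat (n := n) (m := m) (d := d) k1 K2)).PosDef) :
    ∀ (x : Fin n → ℝ) (w : Fin d → ℝ),
      w ∈ C (g x (ur + k1 + K2.mulVec (x - xr)) w) →
      f0 x (ur + k1 + K2.mulVec (x - xr)) +
          Vnext (f x (ur + k1 + K2.mulVec (x - xr)) w) ≤
        etaVec xr x ⬝ᵥ P.mulVec (etaVec xr x) :=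
  robust_ddp_backward_step_general n m d l f g f0 C Vnext xr ur wr Q M P k1 K2 h1 h2 h3
end
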